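/- arXiv:2306.01133 — 3 statements merged into one kernel-verified Lean document; each statement's English description precedes it below -/
import Mathlib

section
/- Atkinson-type theorem: Let F, D, D′ ∈ B(A) with FD = I + K₁ and D′F = I + K₂ for some K₁, K₂ ∈ F. Then F ∈ MKΦ(A), i.e., F admits a decomposition A = M₁ ⊕̃ N₁ → M₂ ⊕̃ N₂ = A with respect to which F is diagonal diag(F₁, F₄), F₁ an isomorphism, and P_{N₁}, P_{N₂} ∈ F. -/
/-!
Common setup: a unital C*-algebra `A` viewed as a right Hilbert module over itself
(with inner product `⟪a,b⟫ = a* b`).  Bounded adjointable operators `B(A)` are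
identified with `A` itself acting by left multiplication.
-/

section Defs

variable {A : Type*} [CStarAlgebra A]

/-- A projection (self-adjoint idempotent). -/
def IsProjn (p : A) : Prop := IsSelfAdjoint p ∧ p * p = p

/-- Murray–von Neumann equivalence: `p ∼ q` iff `∃ v, v v* = q ∧ v* v = p`. -/
def MvN (p q : A) : Prop := ∃ v : A, v * star v = q ∧ star v * v = p

/-- `a` is invertible up to the pair of projections `(p, q)` (Kečkić–Lazović). -/
def InvUpTo (a p q : A) : Prop :=
  ∃ b : A, (1 - q) * a * (1 - p) * b = 1 - q ∧ b * ((1 - q) * a * (1 - p)) = 1 - p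

/-- A closed (right) submodule of `A` as a Hilbert module over itself. -/
def IsClosedSubmodule (S : Set A) : Prop :=
  IsClosed S ∧ (0 : A) ∈ S ∧ (∀ x ∈ S, ∀ y ∈ S, x + y ∈ S) ∧
    (∀ x ∈ S, ∀ a : A, x * a ∈ S) ∧ (∀ x ∈ S, -x ∈ S) ∧ (∀ x ∈ S, ∀ c : ℂ, c • x ∈ S)

/-- Orthogonal complement with respect to `⟪a,b⟫ = a* b`. -/
def orthC (S : Set A) : Set A := {x : A | ∀ y ∈ S, star y * x = 0}

/-- `S` is orthogonally complementable in `A`: `A = S ⊕ S^⊥`. -/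
def OrthComplementable (S : Set A) : Prop :=
  ∀ x : A, ∃ n ∈ S, ∃ m ∈ orthC S, x = n + m

/-- `p` is the orthogonal projection onto the submodule `S` (so `S = Im p`). -/
def IsOrthProjOnto (p : A) (S : Set A) : Prop :=
  IsSelfAdjoint p ∧ p * p = p ∧ S = {x : A | p * x = x}

/-- `A = M ⊕̃ N`: direct (not necessarily orthogonal) sum decomposition. -/
def IsComplPair (M N : Set A) : Prop :=
  (M ∩ N ⊆ {0}) ∧ ∀ x : A, ∃ m ∈ M, ∃ n ∈ N, x = m + n

/-- Image of a submodule under the operator of left multiplication by `F`. -/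
def imageOf (F : A) (S : Set A) : Set A := {y : A | ∃ x ∈ S, y = F * x}

/-- The restriction of (left multiplication by) `F` to `M` is an isomorphism onto `M'`:
it maps `M` onto `M'` and is bounded below (hence bicontinuous onto `M'`). -/
def IsIsoOn (F : A) (M M' : Set A) : Prop :=
  (∀ x ∈ M, F * x ∈ M') ∧ (∀ y ∈ M', ∃ x ∈ M, F * x = y) ∧
    ∃ c > (0 : ℝ), ∀ x ∈ M, c * ‖x‖ ≤ ‖F * x‖

/-- Isomorphism of Hilbert submodules: a bicontinuous `A`-linear bijection `M → N`. -/
def SubmoduleIso (M N : Set A) : Prop :=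
  ∃ f : A → A, (∀ x y : A, f (x + y) = f x + f y) ∧ (∀ x a : A, f (x * a) = f x * a) ∧
    (∀ x ∈ M, f x ∈ N) ∧ (∀ y ∈ N, ∃ x ∈ M, f x = y) ∧
    (∃ C > (0 : ℝ), ∀ x ∈ M, ‖f x‖ ≤ C * ‖x‖) ∧
    (∃ c > (0 : ℝ), ∀ x ∈ M, c * ‖x‖ ≤ ‖f x‖)

end Defs

/-- An ideal of finite type elements in the sense of Kečkić–Lazović: a self-adjoint
two-sided ideal with an approximate unit consisting of projections, such that for any
two projections `p, q` in it there is `v` with `v v* = q` and `v* v ⊥ p`. -/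
structure FiniteTypeIdeal (A : Type*) [CStarAlgebra A] where
  carrier : Set A
  zero_mem : (0 : A) ∈ carrier
  add_mem : ∀ {x y : A}, x ∈ carrier → y ∈ carrier → x + y ∈ carrier
  mul_left_mem : ∀ (a : A) {x : A}, x ∈ carrier → a * x ∈ carrier
  mul_right_mem : ∀ (a : A) {x : A}, x ∈ carrier → x * a ∈ carrier
  star_mem : ∀ {x : A}, x ∈ carrier → star x ∈ carrier
  approx_unit : ∀ x ∈ carrier, ∀ ε > (0 : ℝ), ∃ p ∈ carrier, IsProjn p ∧ ‖x - p * x‖ < ε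
  orth_exists : ∀ p q : A, p ∈ carrier → q ∈ carrier → IsProjn p → IsProjn q →
    ∃ v : A, v * star v = q ∧ star v * v * p = 0 ∧ IsProjn (star v * v + p)

section Defs2

variable {A : Type*} [CStarAlgebra A]

/-- `OrthSumList L s` : `s` is a sum of pairwise orthogonal projections equivalent
(one by one) to the members of the list `L`.  Used to express sums of classes in the
semigroup `S(F)` of Murray–von Neumann classes of projections. -/
inductive OrthSumList : List A → A → Prop
  | nil : OrthSumList [] 0
  | cons {p p' s : A} {L : List A} : MvN p p' → OrthSumList L s → p' * s = 0 →
      OrthSumList (p :: L) (p' + s)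

/-- Equality of the formal sums of the classes of the projections in `L1` and in `L2`
in the Grothendieck group `K(F)` of the semigroup of Murray–von Neumann classes of
projections in `Fc`:  `Σ [L1] = Σ [L2]` in `K(F)` iff `Σ [L1] + [r] = Σ [L2] + [r]`
holds in the semigroup for some projection `r ∈ Fc`. -/
def KEqList (Fc : Set A) (L1 L2 : List A) : Prop :=
  ∃ r s t : A, IsProjn r ∧ r ∈ Fc ∧ OrthSumList (L1 ++ [r]) s ∧
    OrthSumList (L2 ++ [r]) t ∧ MvN s t

/-- `F` admits a decomposition `A = M₁ ⊕̃ N₁ → M₂ ⊕̃ N₂ = A` with respect to which it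
is diagonal `diag(F₁, F₄)`, with `F₁ : M₁ → M₂` an isomorphism, and `pN1, pN2` are the
orthogonal projections onto `N₁, N₂`. -/
def HasDiagDecomp (F pN1 pN2 : A) : Prop :=
  ∃ M1 N1 M2 N2 : Set A,
    IsClosedSubmodule M1 ∧ IsClosedSubmodule N1 ∧ IsClosedSubmodule M2 ∧
    IsClosedSubmodule N2 ∧ IsComplPair M1 N1 ∧ IsComplPair M2 N2 ∧
    IsIsoOn F M1 M2 ∧ (∀ x ∈ N1, F * x ∈ N2) ∧
    IsOrthProjOnto pN1 N1 ∧ IsOrthProjOnto pN2 N2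

/-- The Mishchenko–Fomenko type Fredholm class `MKΦ(A)` relative to the ideal `Fc`:
`F` has a diagonalizing decomposition whose corner projections lie in `Fc`.
Its index is `[pN1] - [pN2] ∈ K(F)`. -/
def MKPhi (Fc : FiniteTypeIdeal A) (F n1 n2 : A) : Prop :=
  HasDiagDecomp F n1 n2 ∧ n1 ∈ Fc.carrier ∧ n2 ∈ Fc.carrier

end Defs2

section AuxLemmas

variable {A : Type*} [CStarAlgebra A]

private lemma isUnit_one_add_mul_star {x : A} : IsUnit (1 + x * star x) := by
  rw [← spectrum.zero_notMem_iff ℝ]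
  intro h0
  have h0' : (-1 : ℝ) + 1 ∈ spectrum ℝ (1 + x * star x) := by norm_num; exact h0
  rw [spectrum.add_mem_iff] at h0'
  have h : (-1 : ℝ) ∈ spectrum ℝ (x * star x) := by simpa using h0'
  have := spectrum_star_mul_self_nonneg (b := star x) (-1) (by simpa using h)
  linarith

private lemma units_inv_comm (u : Aˣ) (b : A) (h : (u : A) * b = b * u) :
    (↑u⁻¹ : A) * b = b * ↑u⁻¹ := by
  calc (↑u⁻¹ : A) * b = ↑u⁻¹ * (b * ↑u * ↑u⁻¹) := by rw [mul_assoc b, u.mul_inv, mul_one]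
  _ = ↑u⁻¹ * ((↑u : A) * b * ↑u⁻¹) := by rw [← h]
  _ = b * ↑u⁻¹ := by rw [← mul_assoc, ← mul_assoc, u.inv_mul, one_mul]

/-- Range projection of an idempotent. -/
private lemma range_proj (f : A) (hf : f * f = f) :
    ∃ q w : A, q = f * star f * w ∧ IsSelfAdjoint q ∧ q * q = q ∧
      ∀ x : A, q * x = x ↔ f * x = x := by
  set g := star f with hg
  have hgg : g * g = g := by rw [hg, ← star_mul, hf]
  set z := 1 + (f - g) * star (f - g) with hz
  have hzu : IsUnit z := isUnit_one_add_mul_star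
  have hzsa : star z = z := by
    rw [hz]; simp [star_add, star_mul, star_star]
  have hstar_sub : star (f - g) = g - f := by rw [star_sub, hg, star_star]
  have hexp : z = 1 + (f * g - f - g + g * f) := by
    rw [hz, hstar_sub]
    have h1 : (f - g) * (g - f) = f * g - f * f - (g * g - g * f) := by noncomm_ring
    rw [h1, hf, hgg]; abel
  have hzf : z * f = f * (g * f) := by
    have t : z * f = f + ((f * g) * f - f * f - g * f + g * (f * f)) := by
      rw [hexp]; noncomm_ring
    rw [hf] at t
    rw [t]; noncomm_ring
  have hfz : f * z = f * (g * f) := by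
    have t : f * z = f + ((f * f) * g - f * f - f * g + (f * g) * f) := by
      rw [hexp]; noncomm_ring
    rw [hf] at t
    rw [t]; noncomm_ring
  have hzfc : z * f = f * z := by rw [hzf, ← hfz]
  obtain ⟨u, huz⟩ := hzu
  set w := (↑u⁻¹ : A) with hw
  have hzw : z * w = 1 := by rw [hw, ← huz]; exact u.mul_inv
  have hwz : w * z = 1 := by rw [hw, ← huz]; exact u.inv_mul
  have hwf : w * f = f * w := by
    rw [hw]; exact units_inv_comm u f (by rw [huz]; exact hzfc)
  have hzgc : z * g = g * z := by
    have := congrArg star hzfc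
    rw [star_mul, star_mul, hzsa, ← hg] at this
    exact this.symm
  have hwg : w * g = g * w := by
    rw [hw]; exact units_inv_comm u g (by rw [huz]; exact hzgc)
  have hwsa : star w = w := by
    have h1 : star w * z = 1 := by
      have := congrArg star hzw
      rwa [star_mul, hzsa, star_one] at this
    calc star w = star w * (z * w) := by rw [hzw, mul_one]
    _ = (star w * z) * w := by rw [mul_assoc]
    _ = w := by rw [h1, one_mul]
  have hqf : (f * g * w) * f = f := by
    calc f * g * w * f = f * g * (w * f) := by rw [mul_assoc]
    _ = f * g * (f * w) := by rw [hwf]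
    _ = (f * (g * f)) * w := by noncomm_ring
    _ = (f * z) * w := by rw [← hfz]
    _ = f := by rw [mul_assoc, hzw, mul_one]
  have hfq : f * (f * g * w) = f * g * w := by
    calc f * (f * g * w) = (f * f) * (g * w) := by noncomm_ring
    _ = f * g * w := by rw [hf, mul_assoc]
  refine ⟨f * g * w, w, by rw [hg], ?_, ?_, ?_⟩
  · show star (f * g * w) = f * g * w
    calc star (f * g * w) = star w * (star g * star f) := by rw [star_mul, star_mul]
    _ = w * (f * g) := by rw [hwsa, hg, star_star]
    _ = (w * f) * g := by rw [mul_assoc]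
    _ = (f * w) * g := by rw [hwf]
    _ = f * (g * w) := by rw [mul_assoc, hwg]
    _ = f * g * w := by rw [mul_assoc]
  · calc (f * g * w) * (f * g * w) = ((f * g * w) * f) * (g * w) := by noncomm_ring
    _ = f * (g * w) := by rw [hqf]
    _ = f * g * w := by rw [mul_assoc]
  · intro x
    constructor
    · intro h
      calc f * x = f * ((f * g * w) * x) := by rw [h]
      _ = (f * (f * g * w)) * x := by noncomm_ring
      _ = (f * g * w) * x := by rw [hfq]
      _ = x := h
    · intro h
      calc (f * g * w) * x = (f * g * w) * (f * x) := by rw [h]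
      _ = ((f * g * w) * f) * x := by noncomm_ring
      _ = f * x := by rw [hqf]
      _ = x := h

private lemma closedSubmodule_fix (g : A) : IsClosedSubmodule {x : A | g * x = x} := by
  refine ⟨?_, by simp, ?_, ?_, ?_, ?_⟩
  · exact isClosed_eq (continuous_const.mul continuous_id) continuous_id
  · intro x hx y hy; simp only [Set.mem_setOf_eq] at *; rw [mul_add, hx, hy]
  · intro x hx a; simp only [Set.mem_setOf_eq] at *; rw [← mul_assoc, hx]
  · intro x hx; simp only [Set.mem_setOf_eq] at *; rw [mul_neg, hx]
  · intro x hx c; simp only [Set.mem_setOf_eq] at *; rw [mul_smul_comm, hx]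

private lemma closedSubmodule_ker (g : A) : IsClosedSubmodule {x : A | g * x = 0} := by
  refine ⟨?_, by simp, ?_, ?_, ?_, ?_⟩
  · exact isClosed_eq (continuous_const.mul continuous_id) continuous_const
  · intro x hx y hy; simp only [Set.mem_setOf_eq] at *; rw [mul_add, hx, hy, add_zero]
  · intro x hx a; simp only [Set.mem_setOf_eq] at *; rw [← mul_assoc, hx, zero_mul]
  · intro x hx; simp only [Set.mem_setOf_eq] at *; rw [mul_neg, hx, neg_zero]
  · intro x hx c; simp only [Set.mem_setOf_eq] at *; rw [mul_smul_comm, hx, smul_zero]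

end AuxLemmas

/-- Atkinson-type theorem: if `F D = I + K₁` and `D' F = I + K₂` with
`K₁, K₂ ∈ F`, then `F ∈ MKΦ(A)`. -/
theorem stmt_14 {A : Type*} [CStarAlgebra A] (Fc : FiniteTypeIdeal A) (F D D' K1 K2 : A)
    (h1 : F * D = 1 + K1) (h2 : D' * F = 1 + K2)
    (hK1 : K1 ∈ Fc.carrier) (hK2 : K2 ∈ Fc.carrier) :
    ∃ n1 n2 : A, MKPhi Fc F n1 n2 := by
    classical
  have hsub : ∀ x y : A, x ∈ Fc.carrier → y ∈ Fc.carrier → x - y ∈ Fc.carrier := by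
    intro x y hx hy
    rw [sub_eq_add_neg, ← neg_one_mul]
    exact Fc.add_mem hx (Fc.mul_left_mem (-1) hy)
  by_cases hD' : D' = 0
  · -- degenerate case: `1 ∈ Fc`, take the decomposition `A = 0 ⊕ A`.
    have h1F : (1 : A) ∈ Fc.carrier := by
      have hK2' : K2 = -1 := by
        have h0 : (1 : A) + K2 = 0 := by rw [← h2, hD', zero_mul]
        exact eq_neg_of_add_eq_zero_right h0
      simpa [hK2'] using Fc.mul_left_mem (-1) hK2
    refine ⟨1, 1, ⟨⟨{x : A | (1 : A) * x = 0}, {x : A | (1 : A) * x = x},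
      {x : A | (1 : A) * x = 0}, {x : A | (1 : A) * x = x},
      closedSubmodule_ker 1, closedSubmodule_fix 1, closedSubmodule_ker 1,
      closedSubmodule_fix 1, ?_, ?_, ?_, ?_, ?_, ?_⟩, h1F, h1F⟩⟩
    · constructor
      · intro x hx
        have := hx.1
        simp only [Set.mem_setOf_eq, one_mul] at this
        simp [this]
      · intro x
        exact ⟨0, by simp, x, by simp, by simp⟩
    · constructor
      · intro x hx
        have := hx.1
        simp only [Set.mem_setOf_eq, one_mul] at this
        simp [this]
      · intro x
        exact ⟨0, by simp, x, by simp, by simp⟩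
    · refine ⟨?_, ?_, 1, one_pos, ?_⟩
      · intro x hx
        simp only [Set.mem_setOf_eq, one_mul] at hx ⊢
        rw [hx, mul_zero]
      · intro y hy
        simp only [Set.mem_setOf_eq, one_mul] at hy
        exact ⟨0, by simp, by simp [hy]⟩
      · intro x hx
        simp only [Set.mem_setOf_eq, one_mul] at hx
        simp [hx]
    · intro x _
      simp [Set.mem_setOf_eq, one_mul]
    · exact ⟨star_one A, one_mul 1, rfl⟩
    · exact ⟨star_one A, one_mul 1, rfl⟩
  · -- main case
    obtain ⟨p, hpF, hpProj, hpn⟩ :=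
      Fc.approx_unit (star K2) (Fc.star_mem hK2) (1/2) (by norm_num)
    obtain ⟨hpsa, hpp⟩ := hpProj
    have hr : ((1 : A) - p) * (1 - p) = 1 - p := by
      have t : ((1 : A) - p) * (1 - p) = 1 - p - p + p * p := by noncomm_ring
      rw [t, hpp]; abel
    have hK2p : ‖K2 - K2 * p‖ < 1/2 := by
      have t : K2 - K2 * p = star (star K2 - p * star K2) := by
        rw [star_sub, star_star, star_mul, star_star, hpsa.star_eq]
      rw [t, norm_star]
      exact hpn
    have hp1 : ‖(1 : A) - p‖ ≤ 1 := by
      have h2' := CStarRing.norm_star_mul_self (x := (1 : A) - p)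
      rw [star_sub, star_one, hpsa.star_eq, hr] at h2'
      nlinarith [norm_nonneg ((1 : A) - p)]
    set S : A := (1 - p) * K2 * (1 - p) with hSdef
    have hSF : S ∈ Fc.carrier := by
      rw [hSdef]; exact Fc.mul_right_mem _ (Fc.mul_left_mem _ hK2)
    have hSnorm : ‖S‖ < 1 := by
      have hS2 : S = ((1 : A) - p) * (K2 - K2 * p) := by rw [hSdef]; noncomm_ring
      rw [hS2]
      have := norm_mul_le ((1 : A) - p) (K2 - K2 * p)
      nlinarith [norm_nonneg (K2 - K2 * p), norm_nonneg ((1 : A) - p)]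
    have hp1p : p * ((1 : A) - p) = 0 := by rw [mul_sub, mul_one, hpp, sub_self]
    have h1pp : ((1 : A) - p) * p = 0 := by rw [sub_mul, one_mul, hpp, sub_self]
    have hpS : p * S = 0 := by
      have t : p * S = (p * (1 - p)) * (K2 * (1 - p)) := by rw [hSdef]; noncomm_ring
      rw [t, hp1p, zero_mul]
    have hSp : S * p = 0 := by
      have t : S * p = ((1 - p) * K2) * ((1 - p) * p) := by rw [hSdef]; noncomm_ring
      rw [t, h1pp, mul_zero]
    have hzu : IsUnit ((1 : A) + S) := by
      have := isUnit_one_sub_of_norm_lt_one (x := -S) (by rwa [norm_neg])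
      simpa [sub_neg_eq_add] using this
    obtain ⟨u, huz⟩ := hzu
    set w := (↑u⁻¹ : A) with hwdef
    have hzw : ((1 : A) + S) * w = 1 := by rw [hwdef, ← huz]; exact u.mul_inv
    have hwz : w * ((1 : A) + S) = 1 := by rw [hwdef, ← huz]; exact u.inv_mul
    have hzp : ((1 : A) + S) * p = p * ((1 : A) + S) := by
      rw [add_mul, one_mul, hSp, add_zero, mul_add, mul_one, hpS, add_zero]
    have hwp : w * p = p * w := by
      rw [hwdef]; exact units_inv_comm u p (by rw [huz]; exact hzp)
    have hw1p : ((1 : A) - p) * w = w * (1 - p) := by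
      rw [sub_mul, one_mul, mul_sub, mul_one, hwp]
    set W : A := w * ((1 - p) * D') with hWdef
    have hW1p : ((1 : A) - p) * W = W := by
      calc ((1 : A) - p) * W = (((1 : A) - p) * w) * ((1 - p) * D') := by
            rw [hWdef]; noncomm_ring
      _ = w * ((((1 : A) - p) * (1 - p)) * D') := by rw [hw1p]; noncomm_ring
      _ = W := by rw [hr, hWdef]
    have hpW : p * W = 0 := by
      calc p * W = (p * w) * ((1 - p) * D') := by rw [hWdef]; noncomm_ring
      _ = ((w * p) * (1 - p)) * D' := by rw [← hwp]; noncomm_ring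
      _ = (w * (p * (1 - p))) * D' := by rw [mul_assoc w p]
      _ = 0 := by rw [hp1p, mul_zero, zero_mul]
    set G : A := F * (1 - p) with hGdef
    have hkey : ((1 : A) - p) * (1 + K2) * (1 - p) = (1 + S) * (1 - p) := by
      have e1 : ((1 : A) - p) * (1 + K2) * (1 - p)
          = (1 - p) * (1 - p) + (1 - p) * K2 * (1 - p) := by noncomm_ring
      have e2 : ((1 : A) + S) * (1 - p) = (1 - p) + (S - S * p) := by noncomm_ring
      rw [e1, e2, hr, hSp, ← hSdef, sub_zero]
    have hWG : W * G = 1 - p := by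
      calc W * G = w * ((1 - p) * (D' * F) * (1 - p)) := by
            rw [hWdef, hGdef]; noncomm_ring
      _ = w * ((1 - p) * (1 + K2) * (1 - p)) := by rw [h2]
      _ = (w * (1 + S)) * (1 - p) := by rw [hkey]; noncomm_ring
      _ = 1 - p := by rw [hwz, one_mul]
    set e : A := G * W with hedef
    have hee : e * e = e := by
      calc e * e = G * ((W * G) * W) := by rw [hedef]; noncomm_ring
      _ = G * ((1 - p) * W) := by rw [hWG]
      _ = e := by rw [hW1p, hedef]
    have hFW : F * W = e := by
      calc F * W = F * ((1 - p) * W) := by rw [hW1p]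
      _ = e := by rw [hedef, hGdef, mul_assoc]
    have heG : e * G = G := by
      calc e * G = G * (W * G) := by rw [hedef, mul_assoc]
      _ = F * ((1 - p) * (1 - p)) := by rw [hWG, hGdef, mul_assoc]
      _ = G := by rw [hr, hGdef]
    set v : A := (W * F) * p with hvdef
    have hpv : p * v = 0 := by
      calc p * v = ((p * W) * F) * p := by rw [hvdef]; noncomm_ring
      _ = 0 := by rw [hpW, zero_mul, zero_mul]
    have hvp : v * p = v := by
      calc v * p = (W * F) * (p * p) := by rw [hvdef]; noncomm_ring
      _ = v := by rw [hpp, hvdef]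
    have hvv : v * v = 0 := by
      calc v * v = ((W * F) * (p * W)) * (F * p) := by rw [hvdef]; noncomm_ring
      _ = 0 := by rw [hpW, mul_zero, zero_mul]
    have hFv : F * v = e * (F * p) := by
      calc F * v = (F * W) * (F * p) := by rw [hvdef]; noncomm_ring
      _ = e * (F * p) := by rw [hFW]
    set f1 : A := p - v with hf1def
    have hf1 : f1 * f1 = f1 := by
      calc f1 * f1 = p * p - p * v - v * p + v * v := by rw [hf1def]; noncomm_ring
      _ = f1 := by rw [hpp, hpv, hvp, hvv, hf1def]; abel
    have hf2 : ((1 : A) - e) * (1 - e) = 1 - e := by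
      have t : ((1 : A) - e) * (1 - e) = 1 - e - e + e * e := by noncomm_ring
      rw [t, hee]; abel
    -- membership of the corner idempotents in the ideal
    have hvF : v ∈ Fc.carrier := by rw [hvdef]; exact Fc.mul_left_mem _ hpF
    have hf1F : f1 ∈ Fc.carrier := by rw [hf1def]; exact hsub _ _ hpF hvF
    have hf2F : (1 : A) - e ∈ Fc.carrier := by
      have hwV : w = 1 - S * w := by
        have h' : w + S * w = 1 := by
          have t : ((1 : A) + S) * w = w + S * w := by noncomm_ring
          rw [← t]; exact hzw
        exact eq_sub_of_add_eq h'
      have hDD : D' - D = K2 * D - D' * K1 := by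
        have t1 : K2 * D - D' * K1 = (D' * F - 1) * D - D' * (F * D - 1) := by
          rw [h1, h2]; noncomm_ring
        rw [t1]; noncomm_ring
      have hFD' : F * D' = 1 + K1 + F * (K2 * D - D' * K1) := by
        have t2 : F * D' = F * D + F * (D' - D) := by noncomm_ring
        rw [t2, hDD, h1]
      have he2 : e = F * (((1 : A) - p) * (1 - p)) * D'
          - (F * (1 - p)) * ((S * w) * ((1 - p) * D')) := by
        calc e = (F * (1 - p)) * ((1 - S * w) * ((1 - p) * D')) := by
              rw [hedef, hGdef, hWdef, ← hwV]
        _ = _ := by noncomm_ring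
      rw [hr] at he2
      have he3 : (1 : A) - e = (F * (p * D') - K1 - F * (K2 * D - D' * K1))
          + (F * (1 - p)) * ((S * w) * ((1 - p) * D')) := by
        have t3 : F * ((1 : A) - p) * D' = F * D' - F * (p * D') := by noncomm_ring
        rw [he2, t3, hFD']; abel
      rw [he3]
      refine Fc.add_mem (hsub _ _ (hsub _ _ ?_ hK1) ?_) ?_
      · exact Fc.mul_left_mem F (Fc.mul_right_mem D' hpF)
      · exact Fc.mul_left_mem F (hsub _ _ (Fc.mul_right_mem D hK2) (Fc.mul_left_mem D' hK1))
      · exact Fc.mul_left_mem _ (Fc.mul_right_mem _ (Fc.mul_right_mem w hSF))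
    obtain ⟨q1, w1, hq1eq, hq1sa, hq1idem, hq1iff⟩ := range_proj f1 hf1
    obtain ⟨q2, w2, hq2eq, hq2sa, hq2idem, hq2iff⟩ := range_proj ((1 : A) - e) hf2
    have hq1F : q1 ∈ Fc.carrier := by
      rw [hq1eq]; exact Fc.mul_right_mem w1 (Fc.mul_right_mem (star f1) hf1F)
    have hq2F : q2 ∈ Fc.carrier := by
      rw [hq2eq]; exact Fc.mul_right_mem w2 (Fc.mul_right_mem _ hf2F)
    refine ⟨q1, q2, ⟨⟨{x : A | p * x = 0}, {x : A | f1 * x = x},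
      {x : A | e * x = x}, {x : A | ((1 : A) - e) * x = x},
      closedSubmodule_ker p, closedSubmodule_fix f1, closedSubmodule_fix e,
      closedSubmodule_fix (1 - e), ?_, ?_, ?_, ?_, ?_, ?_⟩, hq1F, hq2F⟩⟩
    · -- IsComplPair M1 N1
      constructor
      · intro x hx
        obtain ⟨hxm, hxn⟩ := hx
        simp only [Set.mem_setOf_eq] at hxm hxn
        have hvx : v * x = 0 := by
          calc v * x = (v * p) * x := by rw [hvp]
          _ = v * (p * x) := by rw [mul_assoc]
          _ = 0 := by rw [hxm, mul_zero]
        have : x = 0 := by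
          calc x = f1 * x := hxn.symm
          _ = p * x - v * x := by rw [hf1def, sub_mul]
          _ = 0 := by rw [hxm, hvx, sub_zero]
        simp [this]
      · intro x
        have hpf1 : p * f1 = p := by rw [hf1def, mul_sub, hpp, hpv, sub_zero]
        refine ⟨x - f1 * x, ?_, f1 * x, ?_, by abel⟩
        · simp only [Set.mem_setOf_eq]
          rw [mul_sub, ← mul_assoc, hpf1, sub_self]
        · simp only [Set.mem_setOf_eq]
          rw [← mul_assoc, hf1]
    · -- IsComplPair M2 N2
      constructor
      · intro x hx
        obtain ⟨hxm, hxn⟩ := hx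
        simp only [Set.mem_setOf_eq] at hxm hxn
        rw [sub_mul, one_mul] at hxn
        have h0 : e * x = 0 := sub_eq_self.mp hxn
        have : x = 0 := by rw [← hxm, h0]
        simp [this]
      · intro x
        refine ⟨e * x, ?_, x - e * x, ?_, by abel⟩
        · simp only [Set.mem_setOf_eq]; rw [← mul_assoc, hee]
        · simp only [Set.mem_setOf_eq]
          have t : ((1 : A) - e) * (x - e * x) = x - e * x - (e * x - (e * e) * x) := by
            noncomm_ring
          rw [t, hee]; abel
    · -- IsIsoOn F M1 M2
      refine ⟨?_, ?_, (2 * ‖D'‖)⁻¹, inv_pos.mpr (by have := norm_pos_iff.mpr hD'; linarith), ?_⟩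
      · intro x hx
        simp only [Set.mem_setOf_eq] at hx ⊢
        have hx1 : ((1 : A) - p) * x = x := by rw [sub_mul, one_mul, hx, sub_zero]
        calc e * (F * x) = e * (F * (((1 : A) - p) * x)) := by rw [hx1]
        _ = (e * G) * x := by rw [hGdef]; noncomm_ring
        _ = F * x := by rw [heG, hGdef, mul_assoc, hx1]
      · intro y hy
        simp only [Set.mem_setOf_eq] at hy
        refine ⟨W * y, ?_, ?_⟩
        · simp only [Set.mem_setOf_eq]
          rw [← mul_assoc, hpW, zero_mul]
        · rw [← mul_assoc, hFW, hy]
      · intro x hx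
        simp only [Set.mem_setOf_eq] at hx
        have hK2x : ‖K2 * x‖ ≤ (1/2) * ‖x‖ := by
          have t : K2 * x = (K2 - K2 * p) * x := by
            rw [sub_mul, mul_assoc, hx, mul_zero, sub_zero]
          rw [t]
          calc ‖(K2 - K2 * p) * x‖ ≤ ‖K2 - K2 * p‖ * ‖x‖ := norm_mul_le _ _
          _ ≤ (1/2) * ‖x‖ := mul_le_mul_of_nonneg_right hK2p.le (norm_nonneg x)
        have hDx : D' * (F * x) = x + K2 * x := by
          rw [← mul_assoc, h2, add_mul, one_mul]
        have t1 : ‖x + K2 * x‖ ≤ ‖D'‖ * ‖F * x‖ := by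
          rw [← hDx]; exact norm_mul_le _ _
        have t2 : ‖x‖ ≤ ‖x + K2 * x‖ + ‖K2 * x‖ := by
          have := norm_sub_le (x + K2 * x) (K2 * x)
          simpa using this
        have hDn : (0 : ℝ) < ‖D'‖ := norm_pos_iff.mpr hD'
        rw [inv_mul_le_iff₀ (by positivity)]
        nlinarith
    · -- F maps N1 into N2
      intro x hx
      simp only [Set.mem_setOf_eq] at hx ⊢
      have t : e * (F * f1) = 0 := by
        calc e * (F * f1) = e * (F * p) - e * (F * v) := by rw [hf1def]; noncomm_ring
        _ = e * (F * p) - (e * e) * (F * p) := by rw [hFv]; noncomm_ring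
        _ = 0 := by rw [hee, sub_self]
      have he0 : e * (F * x) = 0 := by
        rw [← hx]
        calc e * (F * (f1 * x)) = (e * (F * f1)) * x := by noncomm_ring
        _ = 0 := by rw [t, zero_mul]
      rw [sub_mul, one_mul, he0, sub_zero]
    · exact ⟨hq1sa, hq1idem, by ext x; exact (hq1iff x).symm⟩
    · exact ⟨hq2sa, hq2idem, by ext x; exact (hq2iff x).symm⟩
end

section
/- If an element a of a unital C*-algebra is invertible up to a pair of projections (p, q) (in the sense of Kečkić–Lazović) and u is an invertible element, then ua is invertible up to (p, q′) for some projection q′ ∼ q, and au is invertible up to (p′, q) for some projection p′ ∼ p; consequently composing a Fredholm element with an invertible element does not change its index. -/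
section StmtAux

open scoped NNReal

variable {A : Type*} [CStarAlgebra A]

lemma exists_algebraMap_le' [PartialOrder A] [StarOrderedRing A] {a : A}
    (h₀ : IsUnit a) (ha : 0 ≤ a) :
    ∃ c > (0:ℝ), algebraMap ℝ A c ≤ a := by
  rcases subsingleton_or_nontrivial A with hS | hN
  · exact ⟨1, one_pos, le_of_eq (Subsingleton.elim _ _)⟩
  have hsa : IsSelfAdjoint a := .of_nonneg ha
  refine (CFC.exists_pos_algebraMap_le_iff hsa).mpr fun x hx => ?_
  have h1 : 0 ≤ x := spectrum_nonneg_of_nonneg ha hx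
  rcases h1.lt_or_eq with h | h
  · exact h
  · exact absurd ((h ▸ hx : (0:ℝ) ∈ spectrum ℝ a)) (by rw [spectrum.zero_notMem_iff ℝ]; exact h₀)

lemma rangeProj (w : Aˣ) {r : A} (hr : IsProjn r) :
    ∃ g x y : A, IsProjn g ∧ x * star x = r ∧ star x * x = g ∧
      g * ((w : A) * r) = (w : A) * r ∧ g = (w : A) * (r * y) := by
  obtain ⟨hr1, hr2⟩ := hr
  letI : PartialOrder A := CStarAlgebra.spectralOrder A
  haveI : StarOrderedRing A := CStarAlgebra.spectralOrderedRing A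
  set W : A := (w : A) with hW_def
  set z : A := r * star W * W * r with hz_def
  have hzr : z = star (W * r) * (W * r) := by
    rw [hz_def, star_mul, hr1.star_eq]; simp only [mul_assoc]
  have hz0 : 0 ≤ z := hzr ▸ star_mul_self_nonneg _
  set e : A := 1 - r with he_def
  have hesa : IsSelfAdjoint e := by
    rw [IsSelfAdjoint, he_def, star_sub, star_one, hr1.star_eq]
  have hee : e * e = e := by
    rw [he_def, sub_mul, mul_sub, mul_sub, hr2]; simp
  have he0 : 0 ≤ e := by
    have h : e = star e * e := by rw [hesa.star_eq, hee]
    exact h ▸ star_mul_self_nonneg e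
  have hr0 : 0 ≤ r := by
    have h : r = star r * r := by rw [hr1.star_eq, hr2]
    exact h ▸ star_mul_self_nonneg r
  have hrz : r * z = z := by
    rw [hz_def, show r * (r * star W * W * r) = (r * r) * star W * W * r by
      simp only [mul_assoc], hr2]
  have hzr2 : z * r = z := by
    rw [hz_def, mul_assoc, hr2]
  have hre : r * e = 0 := by rw [he_def, mul_sub, mul_one, hr2, sub_self]
  have her : e * r = 0 := by rw [he_def, sub_mul, one_mul, hr2, sub_self]
  have hez : e * z = 0 := by
    rw [he_def, sub_mul, one_mul, hrz, sub_self]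
  have hze : z * e = 0 := by
    rw [he_def, mul_sub, mul_one, hzr2, sub_self]
  set t : A := z + e with ht_def
  have ht0 : 0 ≤ t := add_nonneg hz0 he0
  have htsa : IsSelfAdjoint t := .of_nonneg ht0
  have het : e * t = e := by rw [ht_def, mul_add, hez, hee, zero_add]
  have hte : t * e = e := by rw [ht_def, add_mul, hze, hee, zero_add]
  have hrt : r * t = z := by rw [ht_def, mul_add, hrz, hre, add_zero]
  have htr : t * r = z := by rw [ht_def, add_mul, hzr2, her, add_zero]
  -- invertibility of t
  have hwwu : IsUnit (star W * W) := (w.isUnit.star).mul w.isUnit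
  have hww0 : 0 ≤ star W * W := star_mul_self_nonneg W
  obtain ⟨c, hc, hcle⟩ := exists_algebraMap_le' hwwu hww0
  have h1 : c • r ≤ z := by
    have h1a := star_left_conjugate_le_conjugate hcle r
    rw [hr1.star_eq] at h1a
    have h1b : r * algebraMap ℝ A c * r = c • r := by
      rw [Algebra.algebraMap_eq_smul_one, mul_smul_comm, mul_one, smul_mul_assoc, hr2]
    have h1c : r * (star W * W) * r = z := by
      rw [hz_def]; simp only [mul_assoc]
    rw [h1b, h1c] at h1a
    exact h1a
  set m : ℝ := min c 1 with hm_def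
  have hm0 : 0 < m := lt_min hc one_pos
  have hm1 : m • (1:A) ≤ c • r + e := by
    have hkey : c • r + e = m • (1:A) + ((c - m) • r + (1 - m) • e) := by
      have h1e : (1:A) = r + e := by rw [he_def]; abel
      rw [h1e]; module
    rw [hkey]
    refine le_add_of_nonneg_right (add_nonneg (smul_nonneg ?_ hr0) (smul_nonneg ?_ he0))
    · exact sub_nonneg.mpr (min_le_left c 1)
    · exact sub_nonneg.mpr (min_le_right c 1)
  have hm2 : c • r + e ≤ t := by
    rw [ht_def]; exact add_le_add h1 le_rfl
  have hmu : IsUnit (m • (1:A)) := by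
    have hmul : (m • (1:A)) * (m⁻¹ • (1:A)) = 1 := by
      rw [smul_mul_assoc, one_mul, smul_smul, mul_inv_cancel₀ hm0.ne', one_smul]
    have hmul' : (m⁻¹ • (1:A)) * (m • (1:A)) = 1 := by
      rw [smul_mul_assoc, one_mul, smul_smul, inv_mul_cancel₀ hm0.ne', one_smul]
    exact ⟨⟨_, _, hmul, hmul'⟩, rfl⟩
  have htu : IsUnit t :=
    CStarAlgebra.isUnit_of_le _ (hm1.trans hm2) (hmu.isStrictlyPositive (smul_nonneg hm0.le zero_le_one))
  obtain ⟨tu, htu_eq⟩ := htu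
  set T : A := ((tu⁻¹ : Aˣ) : A) with hT_def
  have hTt : T * t = 1 := by rw [← htu_eq, hT_def]; exact tu.inv_mul
  have htT : t * T = 1 := by rw [← htu_eq, hT_def]; exact tu.mul_inv
  have hTsa : star T = T := by
    have h1 : star T * t = 1 := by
      calc star T * t = star T * star t := by rw [htsa.star_eq]
      _ = star (t * T) := (star_mul t T).symm
      _ = 1 := by rw [htT, star_one]
    calc star T = star T * (t * T) := by rw [htT, mul_one]
    _ = (star T * t) * T := by rw [mul_assoc]
    _ = T := by rw [h1, one_mul]
  have hT0 : 0 ≤ T := by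
    have h := star_left_conjugate_nonneg ht0 T
    rwa [hTsa, hTt, one_mul] at h
  have hTr : T * r = r * T := by
    calc T * r = T * (r * (t * T)) := by rw [htT, mul_one]
    _ = T * ((r * t) * T) := by simp only [mul_assoc]
    _ = T * ((t * r) * T) := by rw [hrt, htr]
    _ = (T * t) * (r * T) := by simp only [mul_assoc]
    _ = r * T := by rw [hTt, one_mul]
  have hzT : z * T = r := by
    calc z * T = (r * t) * T := by rw [hrt]
    _ = r * (t * T) := by rw [mul_assoc]
    _ = r := by rw [htT, mul_one]
  have hTz : T * z = r := by
    calc T * z = T * (t * r) := by rw [htr]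
    _ = (T * t) * r := by rw [mul_assoc]
    _ = r := by rw [hTt, one_mul]
  have heT : e * T = e := by
    calc e * T = (e * t) * T := by rw [het]
    _ = e * (t * T) := by rw [mul_assoc]
    _ = e := by rw [htT, mul_one]
  -- square root of T
  set S : A := CFC.sqrt T with hS_def
  have hS0 : (0:A) ≤ S := CFC.sqrt_nonneg T
  have hSsa : IsSelfAdjoint S := .of_nonneg hS0
  have hSS : S * S = T := CFC.sqrt_mul_sqrt_self T hT0
  have hTS : T * S = S * T := by rw [← hSS, mul_assoc]
  have hSt : S * t = t * S := by
    calc S * t = (t * T) * (S * t) := by rw [htT, one_mul]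
    _ = t * ((T * S) * t) := by simp only [mul_assoc]
    _ = t * ((S * T) * t) := by rw [hTS]
    _ = (t * S) * (T * t) := by simp only [mul_assoc]
    _ = t * S := by rw [hTt, mul_one]
  -- commuting S with r via the symmetry j
  set j : A := r + r - 1 with hj_def
  have hjsa : star j = j := by rw [hj_def, star_sub, star_add, star_one, hr1.star_eq]
  have hjj : j * j = 1 := by
    rw [hj_def]
    rw [sub_mul, add_mul, mul_sub, mul_sub, mul_add, mul_add, hr2, mul_one, one_mul, one_mul]
    abel
  have hjT : j * T = T * j := by
    rw [hj_def, sub_mul, add_mul, mul_sub, mul_add, one_mul, mul_one, hTr]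
  have hjTj : j * T * j = T := by
    calc j * T * j = (T * j) * j := by rw [hjT]
    _ = T * (j * j) := by rw [mul_assoc]
    _ = T := by rw [hjj, mul_one]
  have hb0 : 0 ≤ j * S * j := by
    have h := star_left_conjugate_nonneg hS0 j
    rwa [hjsa] at h
  have hbb : (j * S * j) * (j * S * j) = T := by
    calc (j * S * j) * (j * S * j) = j * (S * ((j * j) * (S * j))) := by simp only [mul_assoc]
    _ = j * (S * (S * j)) := by rw [hjj, one_mul]
    _ = (j * (S * S)) * j := by simp only [mul_assoc]
    _ = j * T * j := by rw [hSS, mul_assoc]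
    _ = T := hjTj
  have hjS : S = j * S * j := by
    rw [hS_def]; exact CFC.sqrt_unique hbb hb0
  have hSj : S * j = j * S := by
    nth_rewrite 1 [hjS]
    rw [mul_assoc, mul_assoc, hjj, mul_one]
  have hSr : S * r = r * S := by
    have h3 : S * r + S * r - S = r * S + r * S - S := by
      calc S * r + S * r - S = S * j := by rw [hj_def, mul_sub, mul_add, mul_one]
      _ = j * S := hSj
      _ = r * S + r * S - S := by rw [hj_def, sub_mul, add_mul, one_mul]
    have h4 : S * r + S * r = r * S + r * S := by
      have := congrArg (· + S) h3
      simpa using this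
    have h5 : (2:ℝ) • (S * r) = (2:ℝ) • (r * S) := by
      rw [two_smul, two_smul]; exact h4
    have h6 := congrArg (fun x : A => (2⁻¹:ℝ) • x) h5
    simpa [smul_smul] using h6
  have hSe : S * e = e * S := by
    rw [he_def, mul_sub, sub_mul, mul_one, one_mul, hSr]
  -- the data
  obtain ⟨z', hz'_def⟩ : ∃ z', z' = r * T := ⟨_, rfl⟩
  obtain ⟨g, hg_def⟩ : ∃ g, g = W * z' * star W := ⟨_, rfl⟩
  obtain ⟨x, hx_def⟩ : ∃ x, x = (S * r) * star W := ⟨_, rfl⟩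
  have hz'sa : star z' = z' := by
    rw [hz'_def, star_mul, hTsa, hr1.star_eq, hTr]
  have hz'r : z' * r = z' := by
    rw [hz'_def, mul_assoc, hTr, ← mul_assoc, hr2]
  have hrz' : r * z' = z' := by rw [hz'_def, ← mul_assoc, hr2]
  have hz'z : z' * z = r := by rw [hz'_def, mul_assoc, hTz, hr2]
  have hzz' : z * z' = r := by rw [hz'_def, ← mul_assoc, hzr2, hzT]
  have hgsa : IsSelfAdjoint g := by
    rw [IsSelfAdjoint]
    calc star g = W * (z' * star W) := by rw [hg_def, star_mul, star_mul, star_star, hz'sa]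
    _ = g := by rw [hg_def, mul_assoc]
  have hcorner : z' * (star W * W) * z' = z' := by
    calc z' * (star W * W) * z' = (z' * r) * (star W * W) * (r * z') := by rw [hz'r, hrz']
    _ = z' * z * z' := by rw [hz_def]; simp only [mul_assoc]
    _ = r * z' := by rw [hz'z]
    _ = z' := hrz'
  have hgg : g * g = g := by
    calc g * g = W * (z' * (star W * W) * z') * star W := by
          rw [hg_def]; simp only [mul_assoc]
    _ = W * z' * star W := by rw [hcorner, mul_assoc]
    _ = g := hg_def.symm
  have hSzS : S * z * S = r := by
    have hz_te : z = t - e := by rw [ht_def]; abel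
    calc S * z * S = S * (t - e) * S := by rw [← hz_te]
    _ = S * t * S - S * e * S := by noncomm_ring
    _ = t * (S * S) - e * (S * S) := by rw [hSt, hSe]; simp only [mul_assoc]
    _ = t * T - e * T := by rw [hSS]
    _ = 1 - e := by rw [htT, heT]
    _ = r := by rw [he_def]; abel
  have hxsa : star x = W * (r * S) := by
    rw [hx_def, star_mul, star_mul, star_star, hSsa.star_eq, hr1.star_eq]
  have hxx : x * star x = r := by
    calc x * star x = ((S * r) * star W) * (W * (r * S)) := by rw [hxsa, hx_def]
    _ = S * (r * star W * W * r) * S := by simp only [mul_assoc]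
    _ = S * z * S := by rw [← hz_def]
    _ = r := hSzS
  have hxg : star x * x = g := by
    calc star x * x = (W * (r * S)) * ((S * r) * star W) := by rw [hxsa, hx_def]
    _ = W * (r * (S * S) * r) * star W := by simp only [mul_assoc]
    _ = W * (r * T * r) * star W := by rw [hSS]
    _ = W * (z' * r) * star W := by rw [hz'_def]
    _ = W * z' * star W := by rw [hz'r, mul_assoc]
    _ = g := hg_def.symm
  have hgWr : g * (W * r) = W * r := by
    calc g * (W * r) = W * (z' * (star W * W) * r) := by rw [hg_def]; simp only [mul_assoc]
    _ = W * ((z' * r) * (star W * W) * r) := by rw [hz'r]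
    _ = W * (z' * z) := by rw [hz_def]; simp only [mul_assoc]
    _ = W * r := by rw [hz'z]
  have hgy : g = W * (r * (T * star W)) := by
    rw [hg_def, hz'_def]; simp only [mul_assoc]
  exact ⟨g, x, T * star W, ⟨hgsa, hgg⟩, hxx, hxg, hgWr, hgy⟩

lemma aux_isom_right {v : A} (h : (star v * v) * (star v * v) = star v * v) :
    v * (star v * v) = v := by
  have hsa : star (star v * v) = star v * v := by simp [star_mul]
  have hzero : star (v * (star v * v) - v) * (v * (star v * v) - v) = 0 := by
    have h1 : star (v * (star v * v) - v) = (star v * v) * star v - star v := by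
      rw [star_sub, star_mul, hsa]
    rw [h1]
    have expand : ((star v * v) * star v - star v) * (v * (star v * v) - v)
        = (star v * v) * ((star v * v) * (star v * v)) - (star v * v) * (star v * v)
          - (star v * v) * (star v * v) + star v * v := by noncomm_ring
    rw [expand]
    simp only [h]
    abel
  have hnorm : ‖v * (star v * v) - v‖ = 0 := by
    have h2 := CStarRing.norm_star_mul_self (x := v * (star v * v) - v)
    rw [hzero, norm_zero] at h2
    exact (mul_self_eq_zero.mp h2.symm)
  have := norm_eq_zero.mp hnorm
  exact sub_eq_zero.mp this

lemma aux_isom_left {v : A} (h : (v * star v) * (v * star v) = v * star v) :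
    (v * star v) * v = v := by
  have h' := aux_isom_right (v := star v) (by simpa [star_star] using h)
  have h'' : star v * (v * star v) = star v := by simpa [star_star] using h'
  calc (v * star v) * v = star (star v * (v * star v)) := by
        simp [star_mul, star_star, mul_assoc]
  _ = star (star v) := by rw [h'']
  _ = v := star_star v

lemma aux_idem {v c : A} (h : v * star v = c) (hc : c * c = c) :
    (star v * v) * (star v * v) = star v * v := by
  have hl : (v * star v) * v = v := aux_isom_left (by rw [h, hc])
  calc (star v * v) * (star v * v) = star v * ((v * star v) * v) := by
        simp only [mul_assoc]
  _ = star v * v := by rw [hl]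

lemma aux_sa {v : A} : IsSelfAdjoint (star v * v) := by
  rw [IsSelfAdjoint, star_mul, star_star]

lemma mvn_symm {a b : A} : MvN a b → MvN b a := by
  rintro ⟨v, h1, h2⟩
  exact ⟨star v, by rwa [star_star], by rwa [star_star]⟩

lemma mvn_refl {p : A} (hp1 : IsSelfAdjoint p) (hp2 : p * p = p) : MvN p p :=
  ⟨p, by rw [hp1.star_eq, hp2], by rw [hp1.star_eq, hp2]⟩

lemma mvn_comp {a b c : A} (hb : b * b = b) (h1 : MvN a b) (h2 : MvN b c) : MvN a c := by
  obtain ⟨v₁, hv₁b, hv₁a⟩ := h1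
  obtain ⟨v₂, hv₂c, hv₂b⟩ := h2
  refine ⟨v₂ * v₁, ?_, ?_⟩
  · have h3 : v₂ * (star v₂ * v₂) = v₂ := aux_isom_right (by rw [hv₂b, hb])
    calc v₂ * v₁ * star (v₂ * v₁) = v₂ * (v₁ * star v₁) * star v₂ := by
          rw [star_mul]; simp only [mul_assoc]
    _ = v₂ * (star v₂ * v₂) * star v₂ := by rw [hv₁b, ← hv₂b]
    _ = v₂ * star v₂ := by rw [h3]
    _ = c := hv₂c
  · have h4 : (v₁ * star v₁) * v₁ = v₁ := aux_isom_left (by rw [hv₁b, hb])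
    calc star (v₂ * v₁) * (v₂ * v₁) = star v₁ * ((star v₂ * v₂) * v₁) := by
          rw [star_mul]; simp only [mul_assoc]
    _ = star v₁ * ((v₁ * star v₁) * v₁) := by rw [hv₂b, ← hv₁b]
    _ = star v₁ * v₁ := by rw [h4]
    _ = a := hv₁a

lemma mvn_add {x x' y y' : A} (hxi : x * x = x) (hx'i : x' * x' = x')
    (hyi : y * y = y) (hy'i : y' * y' = y')
    (hx'sa : IsSelfAdjoint x') (hysa : IsSelfAdjoint y)
    (hxy : x * y = 0) (hx'y' : x' * y' = 0)
    (h1 : MvN x x') (h2 : MvN y y') :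
    MvN (x + y) (x' + y') := by
  obtain ⟨w₁, hw₁x', hw₁x⟩ := h1
  obtain ⟨w₂, hw₂y', hw₂y⟩ := h2
  have hw₁r : w₁ * x = w₁ := by
    rw [← hw₁x]; exact aux_isom_right (by rw [hw₁x, hxi])
  have hw₁l : x' * w₁ = w₁ := by
    rw [← hw₁x']; exact aux_isom_left (by rw [hw₁x', hx'i])
  have hw₂r : w₂ * y = w₂ := by
    rw [← hw₂y]; exact aux_isom_right (by rw [hw₂y, hyi])
  have hw₂l : y' * w₂ = w₂ := by
    rw [← hw₂y']; exact aux_isom_left (by rw [hw₂y', hy'i])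
  have hsw₂ : y * star w₂ = star w₂ := by
    have := congrArg star hw₂r
    rwa [star_mul, hysa.star_eq] at this
  have hsw₁ : star w₁ * x' = star w₁ := by
    have := congrArg star hw₁l
    rwa [star_mul, hx'sa.star_eq] at this
  have ho1 : w₁ * star w₂ = 0 := by
    calc w₁ * star w₂ = (w₁ * x) * (y * star w₂) := by rw [hw₁r, hsw₂]
    _ = w₁ * (x * y) * star w₂ := by simp only [mul_assoc]
    _ = 0 := by rw [hxy, mul_zero, zero_mul]
  have ho2 : star w₁ * w₂ = 0 := by
    calc star w₁ * w₂ = (star w₁ * x') * (y' * w₂) := by rw [hsw₁, hw₂l]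
    _ = star w₁ * (x' * y') * w₂ := by simp only [mul_assoc]
    _ = 0 := by rw [hx'y', mul_zero, zero_mul]
  have ho1' : w₂ * star w₁ = 0 := by
    have := congrArg star ho1
    rwa [star_mul, star_star, star_zero] at this
  have ho2' : star w₂ * w₁ = 0 := by
    have := congrArg star ho2
    rwa [star_mul, star_star, star_zero] at this
  refine ⟨w₁ + w₂, ?_, ?_⟩
  · rw [star_add, add_mul, mul_add, mul_add, hw₁x', hw₂y', ho1, ho1']
    abel
  · rw [star_add, add_mul, mul_add, mul_add, hw₁x, hw₂y, ho2, ho2']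
    abel


lemma mvn_zero : MvN (0:A) 0 := ⟨0, by simp, by simp⟩

lemma isProjn_zero : IsProjn (0:A) := ⟨by rw [IsSelfAdjoint, star_zero], by rw [mul_zero]⟩

lemma keq1 (Fc : FiniteTypeIdeal A) {c d d' : A}
    (hc : IsProjn c) (hd : IsProjn d) (hd' : IsProjn d')
    (hcF : c ∈ Fc.carrier) (hdF : d ∈ Fc.carrier) (hd'F : d' ∈ Fc.carrier)
    (hdd' : MvN d' d) : KEqList Fc.carrier [c, d] [c, d'] := by
  obtain ⟨v₁, hv₁, hv₁o, -⟩ := Fc.orth_exists c d hcF hdF hc hd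
  obtain ⟨v₂, hv₂, hv₂o, -⟩ := Fc.orth_exists c d' hcF hd'F hc hd'
  obtain ⟨d₁, hd₁_def⟩ : ∃ t : A, t = star v₁ * v₁ := ⟨_, rfl⟩
  obtain ⟨d₁', hd₁'_def⟩ : ∃ t : A, t = star v₂ * v₂ := ⟨_, rfl⟩
  have hd₁i : d₁ * d₁ = d₁ := by rw [hd₁_def]; exact aux_idem hv₁ hd.2
  have hd₁'i : d₁' * d₁' = d₁' := by rw [hd₁'_def]; exact aux_idem hv₂ hd'.2
  have hd₁sa : IsSelfAdjoint d₁ := by rw [hd₁_def]; exact aux_sa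
  have hd₁'sa : IsSelfAdjoint d₁' := by rw [hd₁'_def]; exact aux_sa
  have hd₁c : d₁ * c = 0 := by rw [hd₁_def]; exact hv₁o
  have hd₁'c : d₁' * c = 0 := by rw [hd₁'_def]; exact hv₂o
  have hcd₁ : c * d₁ = 0 := by
    have h := congrArg star hd₁c
    rwa [star_mul, hc.1.star_eq, hd₁sa.star_eq, star_zero] at h
  have hcd₁' : c * d₁' = 0 := by
    have h := congrArg star hd₁'c
    rwa [star_mul, hc.1.star_eq, hd₁'sa.star_eq, star_zero] at h
  have hMdd₁ : MvN d d₁ := ⟨star v₁, by rw [star_star, ← hd₁_def], by rwa [star_star]⟩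
  have hM11' : MvN d₁ d₁' :=
    mvn_comp hd.2 ⟨v₁, hv₁, hd₁_def.symm⟩
      (mvn_comp hd'.2 (mvn_symm hdd') (mvn_symm ⟨v₂, hv₂, hd₁'_def.symm⟩))
  refine ⟨0, c + (d₁ + (0 + 0)), c + (d₁' + (0 + 0)), isProjn_zero, Fc.zero_mem, ?_, ?_, ?_⟩
  · show OrthSumList [c, d, 0] (c + (d₁ + (0 + 0)))
    refine OrthSumList.cons (mvn_refl hc.1 hc.2) ?_ ?_
    · refine OrthSumList.cons hMdd₁ ?_ ?_
      · exact OrthSumList.cons mvn_zero OrthSumList.nil (by simp)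
      · simp
    · simp [hcd₁]
  · show OrthSumList [c, d', 0] (c + (d₁' + (0 + 0)))
    refine OrthSumList.cons (mvn_refl hc.1 hc.2) ?_ ?_
    · refine OrthSumList.cons (⟨star v₂, by rw [star_star, ← hd₁'_def], by rwa [star_star]⟩ :
        MvN d' d₁') ?_ ?_
      · exact OrthSumList.cons mvn_zero OrthSumList.nil (by simp)
      · simp
    · simp [hcd₁']
  · have hs : c + (d₁ + ((0:A) + 0)) = c + d₁ := by simp
    have ht : c + (d₁' + ((0:A) + 0)) = c + d₁' := by simp
    rw [hs, ht]
    exact mvn_add hc.2 hc.2 hd₁i hd₁'i hc.1 hd₁sa hcd₁ hcd₁' (mvn_refl hc.1 hc.2) hM11'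

lemma keq2 (Fc : FiniteTypeIdeal A) {c c' d : A}
    (hc : IsProjn c) (hc' : IsProjn c') (hd : IsProjn d)
    (hcF : c ∈ Fc.carrier) (hc'F : c' ∈ Fc.carrier) (hdF : d ∈ Fc.carrier)
    (hcc' : MvN c' c) : KEqList Fc.carrier [c', d] [c, d] := by
  obtain ⟨v₃, hv₃, hv₃o, -⟩ := Fc.orth_exists d c' hdF hc'F hd hc'
  obtain ⟨v₄, hv₄, hv₄o, -⟩ := Fc.orth_exists d c hdF hcF hd hc
  obtain ⟨a₁, ha₁_def⟩ : ∃ t : A, t = star v₃ * v₃ := ⟨_, rfl⟩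
  obtain ⟨a₂, ha₂_def⟩ : ∃ t : A, t = star v₄ * v₄ := ⟨_, rfl⟩
  have ha₁i : a₁ * a₁ = a₁ := by rw [ha₁_def]; exact aux_idem hv₃ hc'.2
  have ha₂i : a₂ * a₂ = a₂ := by rw [ha₂_def]; exact aux_idem hv₄ hc.2
  have ha₁sa : IsSelfAdjoint a₁ := by rw [ha₁_def]; exact aux_sa
  have ha₂sa : IsSelfAdjoint a₂ := by rw [ha₂_def]; exact aux_sa
  have ha₁d : a₁ * d = 0 := by rw [ha₁_def]; exact hv₃o
  have ha₂d : a₂ * d = 0 := by rw [ha₂_def]; exact hv₄o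
  have hM : MvN a₁ a₂ :=
    mvn_comp hc'.2 ⟨v₃, hv₃, ha₁_def.symm⟩
      (mvn_comp hc.2 hcc' (mvn_symm ⟨v₄, hv₄, ha₂_def.symm⟩))
  refine ⟨0, a₁ + (d + (0 + 0)), a₂ + (d + (0 + 0)), isProjn_zero, Fc.zero_mem, ?_, ?_, ?_⟩
  · show OrthSumList [c', d, 0] (a₁ + (d + (0 + 0)))
    refine OrthSumList.cons (⟨star v₃, by rw [star_star, ← ha₁_def], by rwa [star_star]⟩ :
      MvN c' a₁) ?_ ?_
    · refine OrthSumList.cons (mvn_refl hd.1 hd.2) ?_ ?_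
      · exact OrthSumList.cons mvn_zero OrthSumList.nil (by simp)
      · simp
    · simp [ha₁d]
  · show OrthSumList [c, d, 0] (a₂ + (d + (0 + 0)))
    refine OrthSumList.cons (⟨star v₄, by rw [star_star, ← ha₂_def], by rwa [star_star]⟩ :
      MvN c a₂) ?_ ?_
    · refine OrthSumList.cons (mvn_refl hd.1 hd.2) ?_ ?_
      · exact OrthSumList.cons mvn_zero OrthSumList.nil (by simp)
      · simp
    · simp [ha₂d]
  · have hs : a₁ + (d + ((0:A) + 0)) = a₁ + d := by simp
    have ht : a₂ + (d + ((0:A) + 0)) = a₂ + d := by simp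
    rw [hs, ht]
    exact mvn_add ha₁i ha₂i hd.2 hd.2 ha₂sa hd.1 ha₁d ha₂d hM (mvn_refl hd.1 hd.2)

end StmtAux

/-- if `a` is invertible up to `(p, q)` and `u` is invertible, then `u a`
is invertible up to `(p, q')` for some projection `q' ∼ q`, and `a u` is invertible up
to `(p', q)` for some projection `p' ∼ p`; consequently composing with an invertible
does not change the index in `K(F)`. -/
theorem stmt_15 {A : Type*} [CStarAlgebra A] (Fc : FiniteTypeIdeal A) (a u p q : A)
    (hp : IsProjn p) (hq : IsProjn q) (ha : InvUpTo a p q) (hu : IsUnit u) :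
    (∃ q' : A, IsProjn q' ∧ MvN q' q ∧ InvUpTo (u * a) p q' ∧
      (p ∈ Fc.carrier → q ∈ Fc.carrier → KEqList Fc.carrier [p, q] [p, q'])) ∧
    (∃ p' : A, IsProjn p' ∧ MvN p' p ∧ InvUpTo (a * u) p' q ∧
      (p ∈ Fc.carrier → q ∈ Fc.carrier → KEqList Fc.carrier [p', q] [p, q])) := by
  obtain ⟨U, rfl⟩ := hu
  obtain ⟨b0, hb1, hb2⟩ := ha
  obtain ⟨Ui, hUi_def⟩ : ∃ t : A, t = ((U⁻¹ : Aˣ) : A) := ⟨_, rfl⟩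
  have hUiu : Ui * (U : A) = 1 := by rw [hUi_def]; exact U.inv_mul
  have huUi : (U : A) * Ui = 1 := by rw [hUi_def]; exact U.mul_inv
  -- idempotents
  have hEidem : ((1:A) - q) * (1 - q) = 1 - q := by
    rw [sub_mul, mul_sub, mul_sub, hq.2]; simp
  have hFidem : ((1:A) - p) * (1 - p) = 1 - p := by
    rw [sub_mul, mul_sub, mul_sub, hp.2]; simp
  have hEE : ∀ X : A, (1 - q) * ((1 - q) * X) = (1 - q) * X := fun X => by
    rw [← mul_assoc, hEidem]
  have hFF : ∀ X : A, (1 - p) * ((1 - p) * X) = (1 - p) * X := fun X => by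
    rw [← mul_assoc, hFidem]
  have hb1' : ∀ X : A, (1 - q) * (a * ((1 - p) * (b0 * X))) = (1 - q) * X := fun X => by
    calc (1 - q) * (a * ((1 - p) * (b0 * X))) = ((1 - q) * a * (1 - p) * b0) * X := by
          simp only [mul_assoc]
    _ = (1 - q) * X := by rw [hb1]
  have hb2' : ∀ X : A, b0 * ((1 - q) * (a * ((1 - p) * X))) = (1 - p) * X := fun X => by
    calc b0 * ((1 - q) * (a * ((1 - p) * X))) = (b0 * ((1 - q) * a * (1 - p))) * X := by
          simp only [mul_assoc]
    _ = (1 - p) * X := by rw [hb2]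
  have hb2c : b0 * ((1 - q) * (a * (1 - p))) = 1 - p := by
    calc b0 * ((1 - q) * (a * (1 - p))) = b0 * ((1 - q) * a * (1 - p)) := by
          simp only [mul_assoc]
    _ = 1 - p := hb2
  constructor
  · -- part 1 : u * a
    obtain ⟨q', x₁, y₁, hq'p, hx₁r, hx₁g, hq'uq, hq'y⟩ := rangeProj U hq
    have h01 : (1 - q') * ((U : A) * q) = 0 := by
      rw [sub_mul, one_mul, hq'uq, sub_self]
    have hdecomp : (1 - q') * (U : A) = (1 - q') * (U : A) * (1 - q) := by
      have h : (1 - q') * (U : A) * (1 - q) = (1 - q') * (U : A) - (1 - q') * ((U : A) * q) := by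
        rw [mul_sub, mul_one, mul_assoc]
      rw [h, h01, sub_zero]
    have hUiq' : Ui * q' = q * y₁ := by
      rw [hq'y, ← mul_assoc, hUiu, one_mul]
    have hEUiq' : (1 - q) * (Ui * q') = 0 := by
      rw [hUiq', ← mul_assoc, sub_mul, one_mul, hq.2, sub_self, zero_mul]
    have hEUi : (1 - q) * (Ui * (1 - q')) = (1 - q) * Ui := by
      have h : Ui * (1 - q') = Ui - Ui * q' := by rw [mul_sub, mul_one]
      rw [h, mul_sub, hEUiq', sub_zero]
    have hEUi' : ∀ X : A, (1 - q) * (Ui * ((1 - q') * X)) = (1 - q) * (Ui * X) := fun X => by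
      calc (1 - q) * (Ui * ((1 - q') * X)) = ((1 - q) * (Ui * (1 - q'))) * X := by
            simp only [mul_assoc]
      _ = ((1 - q) * Ui) * X := by rw [hEUi]
      _ = (1 - q) * (Ui * X) := by simp only [mul_assoc]
    have hid1 : (1 - q') * ((U : A) * a) * (1 - p) * ((1 - p) * b0 * (1 - q) * Ui) = 1 - q' := by
      calc (1 - q') * ((U : A) * a) * (1 - p) * ((1 - p) * b0 * (1 - q) * Ui)
          = ((1 - q') * (U : A)) * (a * ((1 - p) * ((1 - p) * (b0 * ((1 - q) * Ui))))) := by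
            simp only [mul_assoc]
      _ = ((1 - q') * (U : A)) * (a * ((1 - p) * (b0 * ((1 - q) * Ui)))) := by rw [hFF]
      _ = ((1 - q') * (U : A) * (1 - q)) * (a * ((1 - p) * (b0 * ((1 - q) * Ui)))) := by
            rw [← hdecomp]
      _ = ((1 - q') * (U : A)) * ((1 - q) * (a * ((1 - p) * (b0 * ((1 - q) * Ui))))) := by
            simp only [mul_assoc]
      _ = ((1 - q') * (U : A)) * ((1 - q) * ((1 - q) * Ui)) := by rw [hb1']
      _ = ((1 - q') * (U : A)) * ((1 - q) * Ui) := by rw [hEE]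
      _ = ((1 - q') * (U : A) * (1 - q)) * Ui := by simp only [mul_assoc]
      _ = ((1 - q') * (U : A)) * Ui := by rw [← hdecomp]
      _ = (1 - q') * ((U : A) * Ui) := by simp only [mul_assoc]
      _ = 1 - q' := by rw [huUi, mul_one]
    have hid2 : ((1 - p) * b0 * (1 - q) * Ui) * ((1 - q') * ((U : A) * a) * (1 - p)) = 1 - p := by
      calc ((1 - p) * b0 * (1 - q) * Ui) * ((1 - q') * ((U : A) * a) * (1 - p))
          = (1 - p) * (b0 * ((1 - q) * (Ui * ((1 - q') * ((U : A) * (a * (1 - p))))))) := by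
            simp only [mul_assoc]
      _ = (1 - p) * (b0 * ((1 - q) * (Ui * ((U : A) * (a * (1 - p)))))) := by rw [hEUi']
      _ = (1 - p) * (b0 * ((1 - q) * ((Ui * (U : A)) * (a * (1 - p))))) := by
            simp only [mul_assoc]
      _ = (1 - p) * (b0 * ((1 - q) * (a * (1 - p)))) := by rw [hUiu, one_mul]
      _ = (1 - p) * (1 - p) := by rw [hb2c]
      _ = 1 - p := hFidem
    have hq'F : q ∈ Fc.carrier → q' ∈ Fc.carrier := fun hqF => by
      rw [hq'y]; exact Fc.mul_left_mem _ (Fc.mul_right_mem _ hqF)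
    exact ⟨q', hq'p, ⟨x₁, hx₁r, hx₁g⟩, ⟨(1 - p) * b0 * (1 - q) * Ui, hid1, hid2⟩,
      fun hpF hqF => keq1 Fc hp hq hq'p hpF hqF (hq'F hqF) ⟨x₁, hx₁r, hx₁g⟩⟩
  · -- part 2 : a * u
    obtain ⟨Us, hUs_def⟩ : ∃ V : Aˣ, (V : A) = star (U : A) := by
      refine ⟨⟨star (U : A), star Ui, ?_, ?_⟩, rfl⟩
      · rw [← star_mul, hUiu, star_one]
      · rw [← star_mul, huUi, star_one]
    obtain ⟨p', x₂, y₂, hp'p, hx₂r, hx₂g, hp'wr0, hp'y0⟩ := rangeProj Us hp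
    rw [hUs_def] at hp'wr0 hp'y0
    have hp'alt : p' = star y₂ * (p * (U : A)) := by
      calc p' = star p' := (hp'p.1.star_eq).symm
      _ = star (star (U : A) * (p * y₂)) := by rw [← hp'y0]
      _ = star y₂ * (p * (U : A)) := by
            rw [star_mul, star_mul, star_star, hp.1.star_eq]; simp only [mul_assoc]
    have hpF0 : p * (1 - p) = 0 := by rw [mul_sub, mul_one, hp.2, sub_self]
    have hp'UiF : p' * (Ui * (1 - p)) = 0 := by
      calc p' * (Ui * (1 - p)) = star y₂ * ((p * ((U : A) * Ui)) * (1 - p)) := by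
            rw [hp'alt]; simp only [mul_assoc]
      _ = star y₂ * (p * (1 - p)) := by rw [huUi, mul_one]
      _ = 0 := by rw [hpF0, mul_zero]
    have hp'UiF' : ∀ X : A, (1 - p') * (Ui * ((1 - p) * X)) = Ui * ((1 - p) * X) := fun X => by
      have h0 : p' * (Ui * ((1 - p) * X)) = 0 := by
        calc p' * (Ui * ((1 - p) * X)) = (p' * (Ui * (1 - p))) * X := by simp only [mul_assoc]
        _ = 0 := by rw [hp'UiF, zero_mul]
      rw [sub_mul, one_mul, h0, sub_zero]
    have hpup' : p * ((U : A) * p') = p * (U : A) := by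
      have h := congrArg star hp'wr0
      rw [star_mul, star_mul, star_star, hp.1.star_eq, hp'p.1.star_eq] at h
      rw [← mul_assoc]
      exact h
    have hpu0 : p * ((U : A) * (1 - p')) = 0 := by
      have h : (U : A) * (1 - p') = (U : A) - (U : A) * p' := by rw [mul_sub, mul_one]
      rw [h, mul_sub, hpup', sub_self]
    have hdec2 : (1 - p) * ((U : A) * (1 - p')) = (U : A) * (1 - p') := by
      rw [sub_mul, one_mul, hpu0, sub_zero]
    have hidA : (1 - q) * (a * (U : A)) * (1 - p') * (Ui * (1 - p) * b0 * (1 - q)) = 1 - q := by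
      calc (1 - q) * (a * (U : A)) * (1 - p') * (Ui * (1 - p) * b0 * (1 - q))
          = (1 - q) * (a * ((U : A) * ((1 - p') * (Ui * ((1 - p) * (b0 * (1 - q))))))) := by
            simp only [mul_assoc]
      _ = (1 - q) * (a * ((U : A) * (Ui * ((1 - p) * (b0 * (1 - q)))))) := by rw [hp'UiF']
      _ = (1 - q) * (a * (((U : A) * Ui) * ((1 - p) * (b0 * (1 - q))))) := by
            simp only [mul_assoc]
      _ = (1 - q) * (a * ((1 - p) * (b0 * (1 - q)))) := by rw [huUi, one_mul]
      _ = (1 - q) * (1 - q) := by rw [hb1']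
      _ = 1 - q := hEidem
    have hidB : (Ui * (1 - p) * b0 * (1 - q)) * ((1 - q) * (a * (U : A)) * (1 - p')) = 1 - p' := by
      calc (Ui * (1 - p) * b0 * (1 - q)) * ((1 - q) * (a * (U : A)) * (1 - p'))
          = Ui * ((1 - p) * (b0 * ((1 - q) * ((1 - q) * (a * ((U : A) * (1 - p'))))))) := by
            simp only [mul_assoc]
      _ = Ui * ((1 - p) * (b0 * ((1 - q) * (a * ((U : A) * (1 - p')))))) := by rw [hEE]
      _ = Ui * ((1 - p) * (b0 * ((1 - q) * (a * ((1 - p) * ((U : A) * (1 - p'))))))) := by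
            rw [hdec2]
      _ = Ui * ((1 - p) * ((1 - p) * ((U : A) * (1 - p')))) := by rw [hb2']
      _ = Ui * ((1 - p) * ((U : A) * (1 - p'))) := by rw [hFF]
      _ = Ui * ((U : A) * (1 - p')) := by rw [hdec2]
      _ = (Ui * (U : A)) * (1 - p') := by simp only [mul_assoc]
      _ = 1 - p' := by rw [hUiu, one_mul]
    have hp'F : p ∈ Fc.carrier → p' ∈ Fc.carrier := fun hpF => by
      rw [hp'y0]; exact Fc.mul_left_mem _ (Fc.mul_right_mem _ hpF)
    exact ⟨p', hp'p, ⟨x₂, hx₂r, hx₂g⟩, ⟨Ui * (1 - p) * b0 * (1 - q), hidA, hidB⟩,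
      fun hpF hqF => keq2 Fc hp hp'p hq hpF (hp'F hpF) hqF ⟨x₂, hx₂r, hx₂g⟩⟩
end

section
/- Let A be a unital C*-algebra viewed as a Hilbert module over itself and let N ⊆ M be closed submodules of A such that both N and M are orthogonally complementable in A. Then N is orthogonally complementable inside M; that is, M = N ⊕ (N^⊥ ∩ M), an orthogonal direct sum. -/
/-- if `N ⊆ M` are closed submodules, both orthogonally complementable
in `A`, then `N` is orthogonally complementable in `M`: `M = N ⊕ (N^⊥ ∩ M)`. -/
theorem stmt_16 {A : Type*} [CStarAlgebra A] (N M : Set A)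
    (hN : IsClosedSubmodule N) (hM : IsClosedSubmodule M) (hNM : N ⊆ M)
    (hNc : OrthComplementable N) (hMc : OrthComplementable M) :
    ∀ x ∈ M, ∃ n ∈ N, ∃ r ∈ orthC N ∩ M, x = n + r := by
  intro x hx
  obtain ⟨n, hn, m, hm, hxnm⟩ := hNc x
  refine ⟨n, hn, m, ⟨hm, ?_⟩, hxnm⟩
  have : m = x + (-n) := by rw [hxnm]; abel
  rw [this]
  exact hM.2.2.1 x hx (-n) (hM.2.2.2.2.1 n (hNM hn))
end
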